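/- arXiv:2003.09254 — 3 statements merged into one kernel-verified Lean document; each statement's English description precedes it below -/
import Mathlib

section
/- Suppose the conditional expectation with respect to F1 is given by a kernel K, i.e., K : Ω × F2 → [0,1] satisfies: (1) for every ω ∈ Ω, K(ω, ·) is a probability measure on F2; (2) for each A ∈ F2, the map ω ↦ K(ω, A) is F1-measurable; (3) for each ξ ∈ L¹(Ω, F2, P), E[ξ | F1](ω) = ∫ ξ(τ) K(ω, dτ) for P-almost every ω. If F2 is generated by a countable family of sets and for P-almost every ω ∈ Ω the probability measure K(ω, ·) is atomless on F2, then F2 is atomless conditionally to F1. -/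
open MeasureTheory ProbabilityTheory Set
open scoped ENNReal

/-- The conditional expectation (under `P`, defined on `F2`) of the indicator of `A`
given the sub-σ-algebra `F1`. -/
noncomputable def cexpInd {Ω : Type*} (F1 F2 : MeasurableSpace Ω) (P : @Measure Ω F2)
    (A : Set Ω) : Ω → ℝ :=
  P[A.indicator (fun _ => (1 : ℝ)) | F1]

/-- `F2` is atomless conditionally to `F1`: for every `A ∈ F2` there is `B ∈ F2`, `B ⊆ A`,
with `0 < E[1_B | F1] < E[1_A | F1]` almost surely on the set `{E[1_A | F1] > 0}`. -/
def CondAtomless {Ω : Type*} (F1 F2 : MeasurableSpace Ω) (P : @Measure Ω F2) : Prop :=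
  ∀ A : Set Ω, MeasurableSet[F2] A → ∃ B : Set Ω, MeasurableSet[F2] B ∧ B ⊆ A ∧
    ∀ᵐ ω ∂P, 0 < cexpInd F1 F2 P A ω →
      0 < cexpInd F1 F2 P B ω ∧ cexpInd F1 F2 P B ω < cexpInd F1 F2 P A ω

/-- `K` is a probability kernel realizing the conditional expectation with respect to `F1`. -/
def IsCondKernel {Ω : Type*} (F1 F2 : MeasurableSpace Ω) (P : @Measure Ω F2)
    (K : Ω → @Measure Ω F2) : Prop :=
  (∀ ω, @IsProbabilityMeasure Ω F2 (K ω)) ∧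
  (∀ A : Set Ω, MeasurableSet[F2] A → Measurable[F1] fun ω => K ω A) ∧
  (∀ ξ : Ω → ℝ, Integrable ξ P → P[ξ|F1] =ᵐ[P] fun ω => ∫ τ, ξ τ ∂(K ω))

/-! Since `F2` is countably generated, `F2 = σ(f)` for some `f : Ω → ℝ`. Given `A`, let `c ω` be
the lower median of the law of `f` under `K ω` restricted to `A`; it is `F1`-measurable because
`K` is, and we take `B = A ∩ {f ≤ c}`. For a.e. `ω` the measure `K ω` sees only `F1`-events that
contain `ω`, so it is concentrated on `{c = c ω}` and `K ω B = K ω (A ∩ {f ≤ c ω})`. Atomlessness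
of `K ω` makes the law of `f` have no atoms, so this is exactly `K ω A / 2`. Finally
`E[1_C | F1] = K(·, C)` a.e. -/

open Filter Topology

theorem MeasurableSpace.exists_comap_real_eq {Ω : Type*} [m : MeasurableSpace Ω]
    [MeasurableSpace.CountablyGenerated Ω] :
    ∃ f : Ω → ℝ, MeasurableSpace.comap f Real.measurableSpace = m := by
  obtain ⟨e, he⟩ := exists_measurableEmbedding_real (ℕ → Bool)
  refine ⟨e ∘ mapNatBool Ω, ?_⟩
  rw [← MeasurableSpace.comap_comp, he.comap_eq]
  refine le_antisymm (measurable_mapNatBool Ω).comap_le ?_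
  conv_lhs => rw [← generateFrom_natGeneratingSequence Ω]
  refine generateFrom_le ?_
  rintro _ ⟨n, rfl⟩
  exact ⟨(fun x => x n) ⁻¹' {true}, measurable_pi_apply n (measurableSet_singleton true),
    by ext; simp [mapNatBool]⟩

theorem measure_preimage_singleton_eq_zero_of_comap_eq {Ω β : Type*} [mΩ : MeasurableSpace Ω]
    [mβ : MeasurableSpace β] [MeasurableSingletonClass β] {f : Ω → β}
    (hf : MeasurableSpace.comap f mβ = mΩ) {μ : Measure Ω}
    (hμ : ∀ A, MeasurableSet A → 0 < μ A → ∃ B, MeasurableSet B ∧ B ⊆ A ∧ 0 < μ B ∧ μ B < μ A)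
    (x : β) : μ (f ⁻¹' {x}) = 0 := by
  by_contra hx
  obtain ⟨B, hB, hBx, hB_pos, hB_lt⟩ :=
    hμ _ (hf ▸ ⟨{x}, measurableSet_singleton x, rfl⟩) (pos_iff_ne_zero.2 hx)
  rw [← hf] at hB
  obtain ⟨S, -, rfl⟩ := hB
  by_cases hxS : x ∈ S
  · exact hB_lt.ne (congrArg μ (hBx.antisymm fun τ (hτ : f τ = x) => show f τ ∈ S from hτ ▸ hxS))
  · refine hB_pos.ne' (measure_mono_null (fun τ hτ => ?_) measure_empty)
    exact hxS ((hBx hτ : f τ = x) ▸ hτ)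

theorem tendsto_measure_Iic_atBot (μ : Measure ℝ) [IsFiniteMeasure μ] :
    Tendsto (fun x => μ (Iic x)) atBot (𝓝 0) := by
  have h := tendsto_measure_iInter_atBot (μ := μ) (s := Iic)
    (fun _ => measurableSet_Iic.nullMeasurableSet) (fun _ _ => Iic_subset_Iic.2)
    ⟨0, measure_ne_top _ _⟩
  rwa [iInter_eq_empty_iff.2 fun x => ⟨x - 1, by simp⟩, measure_empty] at h

/-- For `μ = 0` the set is all of `ℝ`, and `sInf` returns the junk value `0`. -/
noncomputable def lowerMedian (μ : Measure ℝ) : ℝ := sInf {x | μ univ ≤ 2 * μ (Iic x)}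

section LowerMedian

variable {μ : Measure ℝ} [IsFiniteMeasure μ]

theorem lowerMedian_le_iff (hμ : μ ≠ 0) {t : ℝ} :
    lowerMedian μ ≤ t ↔ μ univ ≤ 2 * μ (Iic t) := by
  set S := {x : ℝ | μ univ ≤ 2 * μ (Iic x)}
  have hS_up : ∀ ⦃x y⦄, x ≤ y → x ∈ S → y ∈ S := fun x y hxy hx =>
    hx.trans (mul_le_mul_right (measure_mono (Iic_subset_Iic.2 hxy)) 2)
  have hpos : 0 < μ univ := Measure.measure_univ_pos.2 hμ
  have hne : S.Nonempty := by
    have hlim : Tendsto (fun x => 2 * μ (Iic x)) atTop (𝓝 (2 * μ univ)) :=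
      ENNReal.Tendsto.const_mul (tendsto_measure_Iic_atTop μ) (Or.inr ENNReal.ofNat_ne_top)
    obtain ⟨x, hx⟩ := (hlim.eventually (lt_mem_nhds <| by
      rw [two_mul]; exact ENNReal.lt_add_right (measure_ne_top μ univ) hpos.ne')).exists
    exact ⟨x, hx.le⟩
  have hbdd : BddBelow S := by
    have hlim : Tendsto (fun x => 2 * μ (Iic x)) atBot (𝓝 0) := by
      simpa using
        ENNReal.Tendsto.const_mul (tendsto_measure_Iic_atBot μ) (Or.inr ENNReal.ofNat_ne_top)
    obtain ⟨x₀, hx₀⟩ := eventually_atBot.1 (hlim.eventually (gt_mem_nhds hpos))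
    exact ⟨x₀, fun y hy => le_of_not_gt fun hyx => (hx₀ y hyx.le).not_ge hy⟩
  have hmem : lowerMedian μ ∈ S := by
    have hlim := tendsto_measure_biInter_gt (μ := μ) (s := Iic) (a := lowerMedian μ)
      (fun _ _ => measurableSet_Iic.nullMeasurableSet) (fun _ _ _ hij => Iic_subset_Iic.2 hij)
      ⟨_, lt_add_one _, measure_ne_top _ _⟩
    have hIic : ⋂ r > lowerMedian μ, Iic r = Iic (lowerMedian μ) := by
      ext x; simpa using forall_gt_imp_ge_iff_le_of_dense
    rw [hIic] at hlim
    refine ge_of_tendsto (ENNReal.Tendsto.const_mul hlim (Or.inr ENNReal.ofNat_ne_top)) ?_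
    filter_upwards [self_mem_nhdsWithin] with r hr
    obtain ⟨x, hxS, hxr⟩ := exists_lt_of_csInf_lt hne hr
    exact hS_up hxr.le hxS
  exact ⟨fun h => hS_up h hmem, fun h => csInf_le hbdd h⟩

theorem two_mul_measure_Iic_lowerMedian [NullSingletonClass μ] :
    2 * μ (Iic (lowerMedian μ)) = μ univ := by
  rcases eq_or_ne μ 0 with rfl | hμ
  · simp
  refine le_antisymm ?_ ((lowerMedian_le_iff hμ).1 le_rfl)
  obtain ⟨u, hu_mono, hu_lt, hu_lim⟩ := exists_seq_strictMono_tendsto (lowerMedian μ)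
  rw [← measure_congr Iio_ae_eq_Iic, ← iUnion_Iic_eq_Iio_of_lt_of_tendsto hu_lt hu_lim,
    Monotone.measure_iUnion fun i j hij => Iic_subset_Iic.2 (hu_mono.monotone hij),
    ENNReal.mul_iSup]
  exact iSup_le fun n => (not_le.1 fun h => (hu_lt n).not_ge ((lowerMedian_le_iff hμ).2 h)).le

end LowerMedian

theorem measurable_lowerMedian {α : Type*} {mα : MeasurableSpace α} {ν : α → Measure ℝ}
    [∀ a, IsFiniteMeasure (ν a)] (hν : Measurable ν) :
    Measurable fun a => lowerMedian (ν a) := by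
  have hmeas : ∀ s, MeasurableSet s → Measurable fun a => ν a s := fun s hs =>
    (Measure.measurable_coe hs).comp hν
  refine measurable_of_Iic fun t => ?_
  have hpre : (fun a => lowerMedian (ν a)) ⁻¹' Iic t =
      {a | ν a univ ≤ 2 * ν a (Iic t)} ∩ ({a | ν a univ ≠ 0} ∪ {_a | 0 ≤ t}) := by
    ext a
    rcases eq_or_ne (ν a) 0 with h | h
    · simp [h, lowerMedian]
    · simp [h, lowerMedian_le_iff h]
  rw [hpre]
  exact (measurableSet_le (hmeas _ .univ) ((hmeas _ measurableSet_Iic).const_mul 2)).inter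
    ((hmeas _ .univ (measurableSet_singleton 0).compl).union (.const _))

theorem two_mul_measure_inter_le_of_ae_eq_lowerMedian {Ω : Type*} [MeasurableSpace Ω]
    {μ : Measure Ω} [IsFiniteMeasure μ] {f g : Ω → ℝ} (hf : Measurable f) {A : Set Ω}
    (hatom : ∀ x, μ (f ⁻¹' {x}) = 0) (hg : ∀ᵐ τ ∂μ, g τ = lowerMedian ((μ.restrict A).map f)) :
    2 * μ (A ∩ {τ | f τ ≤ g τ}) = μ A := by
  set ν := (μ.restrict A).map f
  have : NullSingletonClass ν := ⟨fun x => by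
    rw [Measure.map_apply hf (measurableSet_singleton x)]
    exact nonpos_iff_eq_zero.1 ((Measure.restrict_apply_le _ _).trans (hatom x).le)⟩
  have hset : (A ∩ {τ | f τ ≤ g τ} : Set Ω) =ᵐ[μ] (A ∩ f ⁻¹' Iic (lowerMedian ν) : Set Ω) := by
    filter_upwards [hg] with τ hτ
    change (τ ∈ A ∩ _) = (τ ∈ A ∩ _)
    simp [hτ]
  calc 2 * μ (A ∩ {τ | f τ ≤ g τ}) = 2 * ν (Iic (lowerMedian ν)) := by
        rw [measure_congr hset, Measure.map_apply hf measurableSet_Iic,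
          Measure.restrict_apply (hf measurableSet_Iic), inter_comm]
  _ = ν univ := two_mul_measure_Iic_lowerMedian
  _ = μ A := by rw [Measure.map_apply hf .univ, preimage_univ, Measure.restrict_apply_univ]

theorem Real.eq_of_forall_rat_le_iff {x y : ℝ} (h : ∀ q : ℚ, x ≤ q ↔ y ≤ q) : x = y := by
  by_contra hne
  rcases lt_or_gt_of_ne hne with hxy | hxy
  · obtain ⟨q, hxq, hqy⟩ := exists_rat_btwn hxy
    exact hqy.not_ge ((h q).1 hxq.le)
  · obtain ⟨q, hyq, hqx⟩ := exists_rat_btwn hxy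
    exact hqx.not_ge ((h q).2 hyq.le)

namespace IsCondKernel

variable {Ω : Type*} {m : MeasurableSpace Ω} [mΩ : MeasurableSpace Ω] {P : Measure Ω}
  {K : Ω → Measure Ω}

theorem cexpInd_ae_eq [IsFiniteMeasure P] (hK : IsCondKernel m mΩ P K) {C : Set Ω}
    (hC : MeasurableSet C) : cexpInd m mΩ P C =ᵐ[P] fun ω => (K ω C).toReal := by
  refine (hK.2.2 _ ((integrable_const 1).indicator hC)).trans (.of_forall fun ω => ?_)
  simpa [measureReal_def, Pi.one_def] using integral_indicator_one (μ := K ω) hC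

theorem ae_ae_mem_iff [IsFiniteMeasure P] (hK : IsCondKernel m mΩ P K) (hm : m ≤ mΩ)
    {C : Set Ω} (hC : MeasurableSet[m] C) : ∀ᵐ ω ∂P, ∀ᵐ τ ∂K ω, (τ ∈ C ↔ ω ∈ C) := by
  have hself : cexpInd m mΩ P C = C.indicator fun _ => 1 :=
    condExp_of_stronglyMeasurable hm (stronglyMeasurable_const.indicator hC)
      ((integrable_const 1).indicator (hm _ hC))
  filter_upwards [hK.cexpInd_ae_eq (hm _ hC)] with ω hω
  have := hK.1 ω
  rw [hself] at hω
  by_cases hωC : ω ∈ C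
  · have hone : K ω C = 1 := by
      rw [← ENNReal.toReal_eq_one_iff, ← hω, indicator_of_mem hωC]
    filter_upwards [ae_iff.2 ((prob_compl_eq_zero_iff (hm _ hC)).2 hone)] with τ hτ
    simp [hτ, hωC]
  · have hzero : K ω C = 0 := by
      have h : (K ω C).toReal = 0 := by rw [← hω, indicator_of_notMem hωC]
      exact ((ENNReal.toReal_eq_zero_iff _).1 h).resolve_right (measure_ne_top _ _)
    filter_upwards [measure_eq_zero_iff_ae_notMem.1 hzero] with τ hτ
    simp [hτ, hωC]

theorem ae_ae_eq_of_measurable [IsFiniteMeasure P] (hK : IsCondKernel m mΩ P K) (hm : m ≤ mΩ)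
    {c : Ω → ℝ} (hc : Measurable[m] c) : ∀ᵐ ω ∂P, ∀ᵐ τ ∂K ω, c τ = c ω := by
  have h := ae_all_iff.2 fun q : ℚ =>
    hK.ae_ae_mem_iff hm (hc measurableSet_Iic : MeasurableSet[m] (c ⁻¹' Iic (q : ℝ)))
  filter_upwards [h] with ω hω
  filter_upwards [ae_all_iff.2 hω] with τ hτ
  exact Real.eq_of_forall_rat_le_iff hτ

theorem measurable_map_restrict (hK : IsCondKernel m mΩ P K) {A : Set Ω} (hA : MeasurableSet A)
    {f : Ω → ℝ} (hf : Measurable f) : Measurable[m] fun ω => ((K ω).restrict A).map f := by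
  refine Measure.measurable_of_measurable_coe _ fun s hs => ?_
  simp_rw [Measure.map_apply hf hs, Measure.restrict_apply (hf hs)]
  exact hK.2.1 _ ((hf hs).inter hA)

end IsCondKernel

theorem stmt10 {Ω : Type*} (F1 F2 : MeasurableSpace Ω) (hle : F1 ≤ F2)
    (P : @Measure Ω F2) (hP : @IsProbabilityMeasure Ω F2 P)
    (K : Ω → @Measure Ω F2) (hK : IsCondKernel F1 F2 P K)
    (hgen : ∃ S : Set (Set Ω), S.Countable ∧ F2 = MeasurableSpace.generateFrom S)
    (hatomless : ∀ᵐ ω ∂P, ∀ A : Set Ω, MeasurableSet[F2] A → 0 < K ω A →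
      ∃ B : Set Ω, MeasurableSet[F2] B ∧ B ⊆ A ∧ 0 < K ω B ∧ K ω B < K ω A) :
    CondAtomless F1 F2 P := by
  obtain ⟨f, hf⟩ := @MeasurableSpace.exists_comap_real_eq Ω F2 ⟨hgen⟩
  have hf_meas : Measurable[F2] f := hf ▸ comap_measurable f
  intro A hA
  have : ∀ ω, IsFiniteMeasure (((K ω).restrict A).map f) := fun ω => by
    have := hK.1 ω; infer_instance
  set c : Ω → ℝ := fun ω => lowerMedian (((K ω).restrict A).map f)
  have hc : Measurable[F1] c := measurable_lowerMedian (hK.measurable_map_restrict hA hf_meas)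
  have hB : MeasurableSet[F2] (A ∩ {τ | f τ ≤ c τ}) :=
    hA.inter (measurableSet_le hf_meas (hc.mono hle le_rfl))
  refine ⟨_, hB, inter_subset_left, ?_⟩
  filter_upwards [hK.cexpInd_ae_eq hA, hK.cexpInd_ae_eq hB, hK.ae_ae_eq_of_measurable hle hc,
    hatomless] with ω hωA hωB hωc hω
  have := hK.1 ω
  have hhalf : 2 * K ω (A ∩ {τ | f τ ≤ c τ}) = K ω A :=
    two_mul_measure_inter_le_of_ae_eq_lowerMedian hf_meas
      (measure_preimage_singleton_eq_zero_of_comap_eq hf hω) hωc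
  have hhalf_real := congrArg ENNReal.toReal hhalf
  rw [ENNReal.toReal_mul] at hhalf_real
  rw [hωA, hωB]
  intro hpos
  norm_num at hhalf_real
  constructor <;> linarith
end

section
/- There exist a probability space (Ω, F2, P), a sub-σ-algebra F1 ⊆ F2, and a kernel K : Ω × F2 → [0,1] such that: K(ω, ·) is a probability measure on F2 for every ω; ω ↦ K(ω, A) is F1-measurable for each A ∈ F2; E[ξ | F1](ω) = ∫ ξ dK(ω,·) P-almost surely for each ξ ∈ L¹(Ω, F2, P); K(ω, ·) is atomless on F2 for every ω ∈ Ω; and yet F2 is NOT atomless conditionally to F1. (Necessarily such an F2 is not countably generated.) -/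
open MeasureTheory ProbabilityTheory Set
open scoped ENNReal

/-!
Let `X` be an uncountable set with the countable/co-countable σ-algebra and co-countable 0-1
measure `ν`, let `Ω = X × ℝ^X`, let `F1` be generated by the first coordinate and let `P` be the
image of `ν` under `t ↦ (t, 0)`. Since `P` only takes the values 0 and 1, every conditional
expectation given `F1` is a.s. constant, so `F2` is not conditionally atomless.
The kernel `K ω` is the law of `(ω₁, u • 1_{ω₁})` with `u` uniform on `[0, 1]`; it is atomless
because the coordinate `ω₁` of the second factor recovers `u`. A product-measurable set depends
on only countably many coordinates of `ℝ^X`, so for all but countably many `x` the spike at `x` is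
invisible to it and `K x` gives it the same mass as the Dirac mass at `(x, 0)`. As `ν` ignores
countable sets, this makes `K` measurable and a version of the conditional expectation.
-/

section ZeroOne

variable {Ω : Type*} {m m₀ : MeasurableSpace Ω} {μ : Measure[m₀] Ω}

def IsZeroOne (μ : Measure[m₀] Ω) : Prop :=
  ∀ s, MeasurableSet[m₀] s → μ s = 0 ∨ μ s = 1

lemma IsZeroOne.exists_ae_eq_const [IsProbabilityMeasure μ] (hμ : IsZeroOne μ) {β : Type*}
    [MeasurableSpace β] [MeasurableSpace.CountablySeparated β] [Nonempty β] {ξ : Ω → β}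
    (hξ : AEMeasurable ξ μ) : ∃ c, ξ =ᵐ[μ] fun _ => c := by
  obtain ⟨c, hc⟩ := Filter.exists_eventuallyEq_const_of_forall_separating (l := ae μ) (f := hξ.mk ξ)
    MeasurableSet fun U hU => by
      rcases hμ _ (hξ.measurable_mk hU) with h | h
      · exact Or.inr (measure_eq_zero_iff_ae_notMem.mp h)
      · exact Or.inl ((ae_iff_measure_eq (hξ.measurable_mk hU).nullMeasurableSet).mpr
          (by rw [measure_univ]; exact h))
  exact ⟨c, hξ.ae_eq_mk.trans hc⟩

lemma IsZeroOne.ae_eq_integral [IsProbabilityMeasure μ] (hμ : IsZeroOne μ) {ξ : Ω → ℝ}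
    (hξ : AEMeasurable ξ μ) : ξ =ᵐ[μ] fun _ => ∫ ω, ξ ω ∂μ := by
  obtain ⟨c, hc⟩ := hμ.exists_ae_eq_const hξ
  rwa [integral_congr_ae hc, integral_const, probReal_univ, one_smul]

lemma IsZeroOne.condExp_ae_eq_integral [IsProbabilityMeasure μ] (hμ : IsZeroOne μ) (hm : m ≤ m₀)
    (ξ : Ω → ℝ) : μ[ξ|m] =ᵐ[μ] fun _ => ∫ ω, ξ ω ∂μ := by
  by_cases hξ : Integrable ξ μ
  · exact (condExp_congr_ae (hμ.ae_eq_integral hξ.aemeasurable)).trans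
      (condExp_const hm _).eventuallyEq
  · rw [condExp_of_not_integrable hξ, integral_undef hξ]
    rfl

lemma IsZeroOne.cexpInd_ae_eq [IsProbabilityMeasure μ] (hμ : IsZeroOne μ) (hm : m ≤ m₀)
    {A : Set Ω} (hA : MeasurableSet[m₀] A) : cexpInd m m₀ μ A =ᵐ[μ] fun _ => μ.real A := by
  simpa [cexpInd, integral_indicator_const _ hA] using
    hμ.condExp_ae_eq_integral hm (A.indicator fun _ => 1)

lemma IsZeroOne.not_condAtomless [IsProbabilityMeasure μ] (hμ : IsZeroOne μ) (hm : m ≤ m₀) :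
    ¬ CondAtomless m m₀ μ := by
  intro h
  obtain ⟨B, hB, -, hae⟩ := h univ MeasurableSet.univ
  obtain ⟨ω, hω, huniv, hBω⟩ :=
    (hae.and ((hμ.cexpInd_ae_eq hm MeasurableSet.univ).and (hμ.cexpInd_ae_eq hm hB))).exists
  simp only [huniv, hBω, probReal_univ, zero_lt_one, forall_const] at hω
  rcases hμ B hB with h | h <;> simp [measureReal_def, h] at hω

end ZeroOne

def WithCocountable (α : Type*) : Type _ := α

namespace WithCocountable

variable {α : Type*}

instance : MeasurableSpace (WithCocountable α) where
  MeasurableSet' s := s.Countable ∨ sᶜ.Countable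
  measurableSet_empty := Or.inl countable_empty
  measurableSet_compl s := by rw [compl_compl]; exact Or.symm
  measurableSet_iUnion f hf := by
    by_cases h : ∀ i, (f i).Countable
    · exact Or.inl (countable_iUnion h)
    · obtain ⟨i, hi⟩ := not_forall.mp h
      exact Or.inr (((hf i).resolve_left hi).mono (compl_subset_compl.mpr (subset_iUnion f i)))

lemma measurableSet_iff {s : Set (WithCocountable α)} :
    MeasurableSet s ↔ s.Countable ∨ sᶜ.Countable := Iff.rfl

open Classical in
noncomputable def cocountableMeasure (α : Type*) : Measure (WithCocountable α) :=
  Measure.ofMeasurable (fun s _ => if s.Countable then 0 else 1) (by simp)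
    fun f hf hdisj => by
      by_cases h : ∀ i, (f i).Countable
      · simp [h, countable_iUnion h]
      · obtain ⟨j, hj⟩ := not_forall.mp h
        have hothers : ∀ i ≠ j, (f i).Countable := fun i hij =>
          ((hf j).resolve_left hj).mono (hdisj hij).subset_compl_right
        rw [if_neg fun hc => hj (hc.mono (subset_iUnion f j)), tsum_eq_single j
          fun i hij => if_pos (hothers i hij), if_neg hj]

lemma cocountableMeasure_of_not_countable {s : Set (WithCocountable α)} (hs : MeasurableSet s)
    (hsc : ¬ s.Countable) : cocountableMeasure α s = 1 := by
  classical
  exact (Measure.ofMeasurable_apply s hs).trans (if_neg hsc)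

lemma cocountableMeasure_eq_zero_iff {s : Set (WithCocountable α)} :
    cocountableMeasure α s = 0 ↔ s.Countable := by
  classical
  refine ⟨fun h => ?_, fun h => (Measure.ofMeasurable_apply s (Or.inl h)).trans (if_pos h)⟩
  obtain ⟨t, hst, ht, ht0⟩ := exists_measurable_superset_of_null h
  by_contra hs
  rw [cocountableMeasure_of_not_countable ht fun htc => hs (htc.mono hst)] at ht0
  exact one_ne_zero ht0

lemma isZeroOne_cocountableMeasure : IsZeroOne (cocountableMeasure α) := fun s hs => by
  by_cases hsc : s.Countable
  · exact Or.inl (cocountableMeasure_eq_zero_iff.mpr hsc)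
  · exact Or.inr (cocountableMeasure_of_not_countable hs hsc)

instance [Uncountable α] : IsProbabilityMeasure (cocountableMeasure α) :=
  ⟨cocountableMeasure_of_not_countable MeasurableSet.univ (not_countable_univ (α := α))⟩

lemma measurable_of_ae_eq {β : Type*} [MeasurableSpace β] {f g : WithCocountable α → β}
    (hg : Measurable g) (hfg : f =ᵐ[cocountableMeasure α] g) : Measurable f := by
  intro U hU
  have hne : {x | f x ≠ g x}.Countable := cocountableMeasure_eq_zero_iff.mp (ae_iff.mp hfg)
  refine (measurableSet_iff.mp (hg hU)).imp (fun h => (h.union hne).mono ?_)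
    fun h => (h.union hne).mono ?_ <;>
  · intro x hx
    by_cases h : f x = g x <;> simp_all

end WithCocountable

lemma MeasurableSet.exists_countable_dependsOn_snd {β ι : Type*} {X : ι → Type*}
    [MeasurableSpace β] [∀ i, MeasurableSpace (X i)] {S : Set (β × Π i, X i)}
    (hS : MeasurableSet S) :
    ∃ J : Set ι, J.Countable ∧
      ∀ b (f g : Π i, X i), (∀ i ∈ J, f i = g i) → ((b, f) ∈ S ↔ (b, g) ∈ S) := by
  induction S, hS using
    MeasurableSpace.induction_on_inter generateFrom_prod.symm isPiSystem_prod with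
  | empty => exact ⟨∅, countable_empty, by simp⟩
  | basic S hS =>
    obtain ⟨A, -, B, hB, rfl⟩ := hS
    obtain ⟨J, t, hJ, rfl⟩ := hB.eq_preimage_restrict_countable
    refine ⟨J, hJ, fun b f g hfg => ?_⟩
    have : J.domRestrict f = J.domRestrict g := funext fun i => hfg i i.2
    simp [this]
  | compl S _ ih =>
    obtain ⟨J, hJ, hS⟩ := ih
    exact ⟨J, hJ, fun b f g hfg => not_congr (hS b f g hfg)⟩
  | iUnion S _ _ ih =>
    choose J hJ hS using ih
    refine ⟨⋃ n, J n, countable_iUnion hJ, fun b f g hfg => ?_⟩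
    simp only [mem_iUnion]
    exact exists_congr fun n => hS n b f g fun i hi => hfg i (mem_iUnion_of_mem n hi)

def Atomless {α : Type*} [MeasurableSpace α] (μ : Measure α) : Prop :=
  ∀ A, MeasurableSet A → 0 < μ A → ∃ B, MeasurableSet B ∧ B ⊆ A ∧ 0 < μ B ∧ μ B < μ A

lemma Atomless.map_of_leftInverse {α β : Type*} [MeasurableSpace α] [MeasurableSpace β]
    {μ : Measure α} (hμ : Atomless μ) {f : α → β} {g : β → α} (hf : Measurable f)
    (hg : Measurable g) (hgf : Function.LeftInverse g f) : Atomless (μ.map f) := by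
  intro A hA hpos
  rw [Measure.map_apply hf hA] at hpos ⊢
  obtain ⟨V, hV, hVA, hV0, hVlt⟩ := hμ _ (hf hA) hpos
  have hpre : f ⁻¹' (A ∩ g ⁻¹' V) = V := by
    rw [preimage_inter, ← preimage_comp, hgf.comp_eq_id, preimage_id, inter_eq_right.mpr hVA]
  refine ⟨A ∩ g ⁻¹' V, hA.inter (hg hV), inter_subset_left, ?_⟩
  rw [Measure.map_apply hf (hA.inter (hg hV)), hpre]
  exact ⟨hV0, hVlt⟩

lemma atomless_volume_restrict_Icc (a b : ℝ) : Atomless (volume.restrict (Icc a b)) := by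
  set μ := volume.restrict (Icc a b)
  intro W hW hpos
  let F : ℝ → ℝ := fun c => μ.real (W ∩ Iic c)
  have hF : LipschitzWith 1 F := by
    refine LipschitzWith.of_le_add fun x y => ?_
    calc F x ≤ μ.real ((W ∩ Iic y) ∪ Ioc y x) := by
          refine measureReal_mono (fun t ⟨htW, htx⟩ => ?_)
          by_cases hty : t ≤ y
          · exact Or.inl ⟨htW, hty⟩
          · exact Or.inr ⟨lt_of_not_ge hty, htx⟩
      _ ≤ F y + μ.real (Ioc y x) := measureReal_union_le _ _
      _ ≤ F y + volume.real (Ioc y x) := by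
          gcongr
          exact ENNReal.toReal_mono measure_Ioc_lt_top.ne (Measure.restrict_le_self _)
      _ ≤ F y + dist x y := by
          rw [Real.volume_real_Ioc, Real.dist_eq]
          gcongr
          exact max_le (le_abs_self _) (abs_nonneg _)
  have hFa : F a = 0 := by
    refine le_antisymm ?_ measureReal_nonneg
    calc F a ≤ μ.real (Iic a) := measureReal_mono inter_subset_right
      _ = 0 := by
        rw [measureReal_eq_zero_iff, Measure.restrict_apply measurableSet_Iic]
        exact measure_mono_null (fun t ⟨hta, hat, _⟩ => le_antisymm hta hat) (measure_singleton a)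
  have hFb : F b = μ.real W := by
    simp only [F, μ, Measure.real, Measure.restrict_apply hW,
      Measure.restrict_apply (hW.inter measurableSet_Iic)]
    congr 2
    ext t; simp +contextual
  have hW0 : 0 < μ.real W := ENNReal.toReal_pos hpos.ne' (measure_ne_top _ _)
  obtain ⟨c, -, hc⟩ : μ.real W / 2 ∈ F '' uIcc a b :=
    intermediate_value_uIcc hF.continuous.continuousOn
      (by rw [hFa, hFb]; exact mem_uIcc_of_le (by positivity) (by linarith))
  refine ⟨W ∩ Iic c, hW.inter measurableSet_Iic, inter_subset_left, ?_, ?_⟩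
  · exact (ENNReal.toReal_pos_iff.mp (show 0 < F c by linarith)).1
  · exact (ENNReal.toReal_lt_toReal (measure_ne_top _ _) (measure_ne_top _ _)).mp
      (show F c < μ.real W by linarith)

instance : IsProbabilityMeasure (volume.restrict (Icc (0 : ℝ) 1)) :=
  ⟨by simp⟩

namespace WithCocountable

variable {α : Type*}

abbrev SpikeSpace (α : Type*) : Type _ := WithCocountable α × (WithCocountable α → ℝ)

open Classical in
noncomputable def spike (x : WithCocountable α) (u : ℝ) : SpikeSpace α := (x, Pi.single x u)

noncomputable def spikeKernel (x : WithCocountable α) : Measure (SpikeSpace α) :=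
  (volume.restrict (Icc (0 : ℝ) 1)).map (spike x)

def zeroSection (t : WithCocountable α) : SpikeSpace α := (t, 0)

noncomputable def zeroSectionMeasure (α : Type*) : Measure (SpikeSpace α) :=
  (cocountableMeasure α).map zeroSection

lemma measurable_spike (x : WithCocountable α) : Measurable (spike x) := by
  classical
  exact measurable_const.prodMk (measurable_update 0)

lemma measurable_zeroSection : Measurable (zeroSection (α := α)) := measurable_prodMk_right

instance (x : WithCocountable α) : IsProbabilityMeasure (spikeKernel x) :=
  Measure.isProbabilityMeasure_map (measurable_spike x).aemeasurable

lemma atomless_spikeKernel (x : WithCocountable α) : Atomless (spikeKernel x) := by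
  classical
  exact (atomless_volume_restrict_Icc 0 1).map_of_leftInverse (measurable_spike x)
    ((measurable_pi_apply x).comp measurable_snd) fun u => by simp [spike]

lemma ae_spike_mem_iff {S : Set (SpikeSpace α)} (hS : MeasurableSet S) :
    ∀ᵐ x ∂cocountableMeasure α, ∀ u, spike x u ∈ S ↔ zeroSection x ∈ S := by
  obtain ⟨J, hJ, hS⟩ := hS.exists_countable_dependsOn_snd
  filter_upwards [measure_eq_zero_iff_ae_notMem.mp (cocountableMeasure_eq_zero_iff.mpr hJ)]
    with x hx u
  exact hS x _ _ fun i hi => by simp [ne_of_mem_of_not_mem hi hx]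

lemma ae_spikeKernel_apply {S : Set (SpikeSpace α)} (hS : MeasurableSet S) :
    ∀ᵐ x ∂cocountableMeasure α, spikeKernel x S = (zeroSection ⁻¹' S).indicator 1 x := by
  filter_upwards [ae_spike_mem_iff hS] with x hx
  rw [spikeKernel, Measure.map_apply (measurable_spike x) hS]
  by_cases h : zeroSection x ∈ S
  · rw [indicator_of_mem (s := zeroSection ⁻¹' S) h,
      show spike x ⁻¹' S = univ from eq_univ_of_forall fun u => (hx u).mpr h]
    simp
  · rw [indicator_of_notMem (s := zeroSection ⁻¹' S) h,
      show spike x ⁻¹' S = ∅ from eq_empty_of_forall_notMem fun u hu => h ((hx u).mp hu)]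
    simp

lemma measurable_spikeKernel_apply {S : Set (SpikeSpace α)} (hS : MeasurableSet S) :
    Measurable fun x => spikeKernel x S :=
  measurable_of_ae_eq (measurable_const.indicator (measurable_zeroSection hS))
    (ae_spikeKernel_apply hS)

lemma ae_ae_spikeKernel_of_ae {p : SpikeSpace α → Prop} (h : ∀ᵐ ω ∂zeroSectionMeasure α, p ω) :
    ∀ᵐ x ∂cocountableMeasure α, ∀ᵐ ω ∂spikeKernel x, p ω := by
  obtain ⟨N, hpN, hN, hN0⟩ := exists_measurable_superset_of_null (ae_iff.mp h)
  rw [zeroSectionMeasure, Measure.map_apply measurable_zeroSection hN] at hN0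
  filter_upwards [ae_spikeKernel_apply hN, measure_eq_zero_iff_ae_notMem.mp hN0] with x hx hxN
  rw [indicator_of_notMem hxN] at hx
  exact measure_mono_null hpN hx

lemma map_fst_zeroSectionMeasure : (zeroSectionMeasure α).map Prod.fst = cocountableMeasure α := by
  rw [zeroSectionMeasure, Measure.map_map measurable_fst measurable_zeroSection]
  exact Measure.map_id

lemma isZeroOne_zeroSectionMeasure : IsZeroOne (zeroSectionMeasure α) := fun S hS => by
  rw [zeroSectionMeasure, Measure.map_apply measurable_zeroSection hS]
  exact isZeroOne_cocountableMeasure _ (measurable_zeroSection hS)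

instance [Uncountable α] : IsProbabilityMeasure (zeroSectionMeasure α) :=
  Measure.isProbabilityMeasure_map measurable_zeroSection.aemeasurable

lemma isCondKernel_spikeKernel [Uncountable α] :
    IsCondKernel (.comap Prod.fst inferInstance) inferInstance (zeroSectionMeasure α)
      fun ω => spikeKernel ω.1 := by
  refine ⟨inferInstance, fun S hS => (measurable_spikeKernel_apply hS).comp
    (comap_measurable Prod.fst), fun ξ hξ => ?_⟩
  have hconst := isZeroOne_zeroSectionMeasure.ae_eq_integral hξ.aemeasurable
  refine (isZeroOne_zeroSectionMeasure.condExp_ae_eq_integral measurable_fst.comap_le ξ).trans ?_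
  refine ae_of_ae_map measurable_fst.aemeasurable (p := fun x => _ = ∫ τ, ξ τ ∂spikeKernel x) ?_
  rw [map_fst_zeroSectionMeasure]
  filter_upwards [ae_ae_spikeKernel_of_ae hconst] with x hx
  rw [integral_congr_ae hx, integral_const, probReal_univ, one_smul]

end WithCocountable

theorem stmt12 :
    ∃ (Ω : Type) (F2 : MeasurableSpace Ω) (F1 : MeasurableSpace Ω)
      (P : @Measure Ω F2) (K : Ω → @Measure Ω F2),
      F1 ≤ F2 ∧ @IsProbabilityMeasure Ω F2 P ∧
      IsCondKernel F1 F2 P K ∧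
      (∀ ω, ∀ A : Set Ω, MeasurableSet[F2] A → 0 < K ω A →
        ∃ B : Set Ω, MeasurableSet[F2] B ∧ B ⊆ A ∧ 0 < K ω B ∧ K ω B < K ω A) ∧
      ¬ CondAtomless F1 F2 P :=
  ⟨WithCocountable.SpikeSpace ℝ, inferInstance, .comap Prod.fst inferInstance,
    WithCocountable.zeroSectionMeasure ℝ, fun ω => WithCocountable.spikeKernel ω.1,
    measurable_fst.comap_le, inferInstance, WithCocountable.isCondKernel_spikeKernel,
    fun ω => WithCocountable.atomless_spikeKernel ω.1,
    WithCocountable.isZeroOne_zeroSectionMeasure.not_condAtomless measurable_fst.comap_le⟩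
end

section
/- Let Q_1, …, Q_n be probability measures on a measurable space (Ω, A). The following are equivalent: (1) (Q_1, …, Q_n) is conditionally atomless, i.e., there exist a probability measure Q with Q_k ≪ Q for each k and a random variable X on (Ω, A) whose law under Q is atomless such that the random vector (dQ_1/dQ, …, dQ_n/dQ) is independent of X under Q; (2) in this definition one can take Q = (1/n)(Q_1 + … + Q_n); (3) in this definition X can be taken to be uniformly distributed on [0,1] under Q. -/
open MeasureTheory ProbabilityTheory Set Filter
open scoped ENNReal

/-!
(2) and (3) are special cases of (1). For (1) → (3), replace `X` by `G ∘ X`, where `G` is the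
distribution function of `X`: it is continuous because the law of `X` is atomless, so `G ∘ X` is
uniform on `[0,1]` (probability integral transform) and is still independent of the densities.
For (1) → (2), write `F = (dQ_k/dν)_k`. The average `μ = n⁻¹ ∑ Q_k` has `ν`-density
`n⁻¹ ∑_k F_k`, a function of `F`; reweighting `ν` by a function of `F` keeps both the law of `X`
and its independence from `F`. Finally `dQ_k/dμ = F_k / (n⁻¹ ∑_j F_j)` is again a function of `F`.
-/

lemma continuous_cdf_of_forall_measure_singleton_eq_zero (ρ : Measure ℝ)
    [IsProbabilityMeasure ρ] (hρ : ∀ x, ρ {x} = 0) : Continuous (cdf ρ) := by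
  refine continuous_iff_continuousAt.2 fun x => ?_
  rw [(cdf ρ).mono.continuousAt_iff_leftLim_eq_rightLim, StieltjesFunction.rightLim_eq]
  have hjump : ENNReal.ofReal (cdf ρ x - Function.leftLim (cdf ρ) x) = 0 := by
    rw [← StieltjesFunction.measure_singleton, measure_cdf, hρ]
  exact le_antisymm ((cdf ρ).mono.leftLim_le le_rfl)
    (sub_nonpos.1 (ENNReal.ofReal_eq_zero.1 hjump))

lemma Monotone.preimage_Iic_eq_Iic_of_mem_range {F : ℝ → ℝ} (hmono : Monotone F)
    (hcont : Continuous F) {p : ℝ} (hp : p ∈ range F) (hbdd : ∃ b, p < F b) :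
    ∃ a, F a = p ∧ F ⁻¹' Iic p = Iic a := by
  obtain ⟨c, hc⟩ := hp
  obtain ⟨b, hb⟩ := hbdd
  set A := F ⁻¹' Iic p
  have hAb : BddAbove A :=
    ⟨b, fun x hx => not_lt.1 fun hbx => (hb.trans_le (hmono hbx.le)).not_ge hx⟩
  have hA : A.Nonempty := ⟨c, hc.le⟩
  have hmem : sSup A ∈ A := (isClosed_Iic.preimage hcont).csSup_mem hA hAb
  refine ⟨sSup A, le_antisymm hmem (hc ▸ hmono (le_csSup hAb hc.le)), ?_⟩
  exact Subset.antisymm (fun x hx => le_csSup hAb hx) fun x hx => (hmono hx).trans hmem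

lemma map_cdf_eq_restrict_Icc (ρ : Measure ℝ) [IsProbabilityMeasure ρ]
    (hρ : ∀ x, ρ {x} = 0) : ρ.map (cdf ρ) = volume.restrict (Icc 0 1) := by
  have hcont := continuous_cdf_of_forall_measure_singleton_eq_zero ρ hρ
  refine Measure.ext_of_Iic _ _ fun p => ?_
  have hIcc : Iic p ∩ Icc 0 1 = Icc 0 (min p 1) := by
    ext x; simp only [mem_inter_iff, mem_Iic, mem_Icc, le_min_iff]; tauto
  rw [Measure.map_apply hcont.measurable measurableSet_Iic,
    Measure.restrict_apply measurableSet_Iic, hIcc, Real.volume_Icc, sub_zero]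
  rcases lt_or_ge p 0 with hp0 | hp0
  · have : cdf ρ ⁻¹' Iic p = ∅ := eq_empty_of_forall_notMem fun x hx =>
      (hp0.trans_le (cdf_nonneg ρ x)).not_ge hx
    rw [this, measure_empty, ENNReal.ofReal_of_nonpos ((min_le_left p 1).trans hp0.le)]
  rcases le_or_gt 1 p with hp1 | hp1
  · have : cdf ρ ⁻¹' Iic p = univ := eq_univ_of_forall fun x => (cdf_le_one ρ x).trans hp1
    simp [this, hp1]
  rw [min_eq_left hp1.le]
  by_cases hrange : p ∈ range (cdf ρ)
  · obtain ⟨a, ha, hpre⟩ := (cdf ρ).mono.preimage_Iic_eq_Iic_of_mem_range hcont hrange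
      ((tendsto_cdf_atTop ρ).eventually (eventually_gt_nhds hp1)).exists
    rw [hpre, ← ofReal_cdf, ha]
  · -- every level in `(0, 1)` is attained, by the intermediate value theorem
    have hp : p = 0 := by
      refine le_antisymm (not_lt.1 fun hp => hrange ?_) hp0
      exact mem_range_of_exists_le_of_exists_ge hcont
        (((tendsto_cdf_atBot ρ).eventually (eventually_lt_nhds hp)).exists.imp fun _ => le_of_lt)
        (((tendsto_cdf_atTop ρ).eventually (eventually_gt_nhds hp1)).exists.imp fun _ => le_of_lt)
    have : cdf ρ ⁻¹' Iic p = ∅ := eq_empty_of_forall_notMem fun x hx =>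
      hrange ⟨x, le_antisymm hx (hp ▸ cdf_nonneg ρ x)⟩
    rw [this, measure_empty, hp, ENNReal.ofReal_zero]

namespace MeasureTheory

variable {Ω ι : Type*} {mΩ : MeasurableSpace Ω} [Fintype ι]

lemma Measure.withDensity_sum_rnDeriv {ν : Measure Ω} [SigmaFinite ν]
    {Q : ι → Measure Ω} [∀ i, SigmaFinite (Q i)] (hQ : ∀ i, Q i ≪ ν) :
    ν.withDensity (fun ω => ∑ i, (Q i).rnDeriv ν ω) = ∑ i, Q i := by
  ext s hs
  rw [withDensity_apply _ hs, lintegral_finsetSum' _ fun i _ =>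
      (Measure.measurable_rnDeriv _ _).aemeasurable, Measure.finsetSum_apply]
  exact Finset.sum_congr rfl fun i _ => Measure.setLIntegral_rnDeriv (hQ i) s

lemma Measure.absolutelyContinuous_smul_sum {c : ℝ≥0∞} (hc : c ≠ 0)
    (Q : ι → Measure Ω) (i : ι) : Q i ≪ c • ∑ j, Q j :=
  (Measure.absolutelyContinuous_of_le (Finset.single_le_sum (fun j _ => (Q j).zero_le)
    (Finset.mem_univ i))).trans (Measure.absolutelyContinuous_smul hc)

lemma isProbabilityMeasure_inv_natCast_smul_sum {n : ℕ} (hn : 0 < n)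
    (Q : Fin n → Measure Ω) [∀ k, IsProbabilityMeasure (Q k)] :
    IsProbabilityMeasure ((n : ℝ≥0∞)⁻¹ • ∑ k, Q k) :=
  ⟨by simp [ENNReal.inv_mul_cancel (Nat.cast_ne_zero.2 hn.ne') (ENNReal.natCast_ne_top n)]⟩

end MeasureTheory

namespace ProbabilityTheory

section ChangeOfDensity

variable {Ω β γ : Type*} {mΩ : MeasurableSpace Ω} [MeasurableSpace β] [MeasurableSpace γ]
  {ν : Measure Ω} {X : Ω → β} {F : Ω → γ} {g : γ → ℝ≥0∞}

lemma IndepFun.withDensity_comp_preimage_inter (hind : IndepFun X F ν) (hX : Measurable X)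
    (hF : Measurable F) (hg : Measurable g) {s : Set β} {t : Set γ} (hs : MeasurableSet s)
    (ht : MeasurableSet t) :
    ν.withDensity (g ∘ F) (X ⁻¹' s ∩ F ⁻¹' t)
      = ν (X ⁻¹' s) * ν.withDensity (g ∘ F) (F ⁻¹' t) := by
  have hprod : (X ⁻¹' s ∩ F ⁻¹' t).indicator (g ∘ F)
      = (s.indicator 1 ∘ X) * (t.indicator g ∘ F) := by
    ext ω
    by_cases hωs : X ω ∈ s <;> by_cases hωt : F ω ∈ t <;> simp [indicator, hωs, hωt]
  rw [withDensity_apply _ ((hX hs).inter (hF ht)), withDensity_apply _ (hF ht),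
    ← lintegral_indicator ((hX hs).inter (hF ht)), ← lintegral_indicator (hF ht), hprod,
    lintegral_mul_eq_lintegral_mul_lintegral_of_indepFun ((measurable_one.indicator hs).comp hX)
      ((hg.indicator ht).comp hF) (hind.comp (measurable_one.indicator hs) (hg.indicator ht))]
  congr 1
  rw [← lintegral_indicator_one (hX hs)]; rfl

variable [IsProbabilityMeasure (ν.withDensity (g ∘ F))]

lemma IndepFun.map_withDensity_comp (hind : IndepFun X F ν) (hX : Measurable X)
    (hF : Measurable F) (hg : Measurable g) : (ν.withDensity (g ∘ F)).map X = ν.map X := by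
  ext s hs
  have := hind.withDensity_comp_preimage_inter hX hF hg hs MeasurableSet.univ
  rw [preimage_univ, inter_univ, measure_univ, mul_one] at this
  rw [Measure.map_apply hX hs, Measure.map_apply hX hs, this]

lemma IndepFun.withDensity_comp (hind : IndepFun X F ν) (hX : Measurable X)
    (hF : Measurable F) (hg : Measurable g) : IndepFun X F (ν.withDensity (g ∘ F)) := by
  refine indepFun_iff_measure_inter_preimage_eq_mul.2 fun s t hs ht => ?_
  rw [hind.withDensity_comp_preimage_inter hX hF hg hs ht, ← Measure.map_apply hX hs,
    ← hind.map_withDensity_comp hX hF hg, Measure.map_apply hX hs]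

end ChangeOfDensity

theorem IndepFun.map_smul_sum_eq_and_indepFun_rnDeriv {Ω ι β : Type*} {mΩ : MeasurableSpace Ω}
    [Fintype ι] [MeasurableSpace β] {Q : ι → Measure Ω} [∀ i, SigmaFinite (Q i)]
    {ν : Measure Ω} [SigmaFinite ν] {c : ℝ≥0∞} (hprob : IsProbabilityMeasure (c • ∑ i, Q i))
    (hQ : ∀ i, Q i ≪ ν) {X : Ω → β} (hX : Measurable X)
    (hind : IndepFun X (fun ω i => (Q i).rnDeriv ν ω) ν) :
    (c • ∑ i, Q i).map X = ν.map X ∧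
      IndepFun X (fun ω i => (Q i).rnDeriv (c • ∑ i, Q i) ω) (c • ∑ i, Q i) := by
  set F : Ω → ι → ℝ≥0∞ := fun ω i => (Q i).rnDeriv ν ω
  set g : (ι → ℝ≥0∞) → ℝ≥0∞ := fun v => c * ∑ i, v i
  have hF : Measurable F := measurable_pi_lambda _ fun i => Measure.measurable_rnDeriv _ _
  have hg : Measurable g := (Finset.measurable_sum _ fun i _ => measurable_pi_apply i).const_mul c
  have hμ : ν.withDensity (g ∘ F) = c • ∑ i, Q i := by
    rw [← Measure.withDensity_sum_rnDeriv hQ, ← withDensity_smul c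
      (Finset.measurable_sum _ fun i _ => Measure.measurable_rnDeriv _ _)]
    rfl
  have hμν : c • ∑ i, Q i ≪ ν := hμ ▸ withDensity_absolutelyContinuous ν _
  have hdens :
      ∀ i, (Q i).rnDeriv (c • ∑ i, Q i) =ᵐ[c • ∑ i, Q i] fun ω => F ω i / g (F ω) := by
    intro i
    filter_upwards [Measure.rnDeriv_eq_div (hQ i) hμν,
      hμν.ae_le (hμ ▸ Measure.rnDeriv_withDensity ν (hg.comp hF))] with ω hω hωμ
    rw [hω, hωμ]; rfl
  have hφ : Measurable fun v : ι → ℝ≥0∞ => fun i => v i / g v :=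
    measurable_pi_lambda _ fun i => (measurable_pi_apply i).div hg
  rw [← hμ] at hprob hdens ⊢
  refine ⟨hind.map_withDensity_comp hX hF hg,
    ((hind.withDensity_comp hX hF hg).comp measurable_id hφ).congr .rfl ?_⟩
  filter_upwards [ae_all_iff.2 hdens] with ω hω
  exact funext fun i => (hω i).symm

end ProbabilityTheory

theorem stmt13 {Ω : Type*} [mA : MeasurableSpace Ω] {n : ℕ} (hn : 0 < n)
    (Q : Fin n → Measure Ω) (hQprob : ∀ k, IsProbabilityMeasure (Q k)) :
    List.TFAE
      [ -- (1) `(Q_1, …, Q_n)` is conditionally atomless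
        (∃ (ν : Measure Ω) (X : Ω → ℝ), IsProbabilityMeasure ν ∧ (∀ k, Q k ≪ ν) ∧
          Measurable X ∧ (∀ x : ℝ, Measure.map X ν {x} = 0) ∧
          IndepFun X (fun ω k => (Q k).rnDeriv ν ω) ν),
        -- (2) one can take `ν = (1/n)(Q_1 + … + Q_n)`
        (∃ X : Ω → ℝ, Measurable X ∧
          (∀ x : ℝ, Measure.map X ((n : ℝ≥0∞)⁻¹ • ∑ k, Q k) {x} = 0) ∧
          IndepFun X (fun ω k => (Q k).rnDeriv ((n : ℝ≥0∞)⁻¹ • ∑ k, Q k) ω)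
            ((n : ℝ≥0∞)⁻¹ • ∑ k, Q k)),
        -- (3) `X` can be taken uniformly distributed on `[0,1]`
        (∃ (ν : Measure Ω) (X : Ω → ℝ), IsProbabilityMeasure ν ∧ (∀ k, Q k ≪ ν) ∧
          Measurable X ∧ Measure.map X ν = volume.restrict (Set.Icc (0 : ℝ) 1) ∧
          IndepFun X (fun ω k => (Q k).rnDeriv ν ω) ν) ] := by
  have := hQprob
  set μ := (n : ℝ≥0∞)⁻¹ • ∑ k, Q k
  have hμ : IsProbabilityMeasure μ := isProbabilityMeasure_inv_natCast_smul_sum hn Q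
  have hQμ : ∀ k, Q k ≪ μ := Measure.absolutelyContinuous_smul_sum (by simp) Q
  tfae_have 2 → 1
  | ⟨X, hX, hatom, hind⟩ => ⟨μ, X, hμ, hQμ, hX, hatom, hind⟩
  tfae_have 3 → 1
  | ⟨ν, X, hν, hQν, hX, hmap, hind⟩ => ⟨ν, X, hν, hQν, hX, by simp [hmap], hind⟩
  tfae_have 1 → 3
  | ⟨ν, X, hν, hQν, hX, hatom, hind⟩ => by
    have := Measure.isProbabilityMeasure_map (μ := ν) hX.aemeasurable
    have hcdf : Measurable (cdf (ν.map X)) := (cdf _).mono.measurable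
    refine ⟨ν, cdf (ν.map X) ∘ X, hν, hQν, hcdf.comp hX, ?_, hind.comp hcdf measurable_id⟩
    rw [← Measure.map_map hcdf hX]
    exact map_cdf_eq_restrict_Icc _ hatom
  tfae_have 1 → 2
  | ⟨ν, X, hν, hQν, hX, hatom, hind⟩ => by
    obtain ⟨hmap, hindμ⟩ := hind.map_smul_sum_eq_and_indepFun_rnDeriv hμ hQν hX
    exact ⟨X, hX, hmap ▸ hatom, hindμ⟩
  tfae_finish
end
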